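/- Compatibility when v = 0 and one register per round: In a round-based register protocol with visibility range v = 0 and dim = 1 register per round, for any finite set L of coverable locations there exists a single abstract execution σ_init →* σ such that every location of L belongs to S(σ). -/

import Mathlib

open scoped Classical

/-- Actions of a round-based register protocol: round increment, read of value `x`
from register `α` of round `k - i`, and write of value `x` to register `α` of the
current round. -/
inductive Act (dim : ℕ) (D : Type) where
  | incr : Act dim D
  | read (i : ℕ) (α : Fin dim) (x : D) : Act dim D
  | write (α : Fin dim) (x : D) : Act dim D

/-- A round-based register protocol. -/
structure Protocol (Q D : Type) (dim : ℕ) where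
  q0 : Q
  d0 : D
  v : ℕ
  T : Set (Q × Act dim D × Q)
  read_le : ∀ q i α x q', (q, Act.read i α x, q') ∈ T → i ≤ v
  write_ne : ∀ q α x q', (q, Act.write α x, q') ∈ T → x ≠ d0

/-- A move: a transition together with the round on which it is performed. -/
abbrev Move (Q D : Type) (dim : ℕ) := (Q × Act dim D × Q) × ℕ

/-- A concrete configuration: a finitely supported multiset of locations and a
valuation of all registers. -/
structure Conc (Q D : Type) (dim : ℕ) where
  loc : (Q × ℕ) →₀ ℕ
  reg : ℕ → Fin dim → D

variable {Q D : Type} {dim : ℕ}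

/-- Value read from register `α` of round `k - i` (registers of negative rounds
hold the initial value). -/
def regVal (P : Protocol Q D dim) (γ : Conc Q D dim) (k i : ℕ) (α : Fin dim) : D :=
  if i ≤ k then γ.reg (k - i) α else P.d0

/-- Updating register `α` of round `k` to value `x`. -/
def updReg (r : ℕ → Fin dim → D) (k : ℕ) (α : Fin dim) (x : D) : ℕ → Fin dim → D :=
  fun k' α' => if k' = k ∧ α' = α then x else r k' α'

/-- Concrete step relation of a round-based register protocol. -/
inductive ConcStep [DecidableEq Q] (P : Protocol Q D dim) :
    Conc Q D dim → Move Q D dim → Conc Q D dim → Prop where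
  | incr {q q' : Q} {k : ℕ} {γ γ' : Conc Q D dim} :
      (q, Act.incr, q') ∈ P.T → 0 < γ.loc (q, k) →
      γ'.loc = γ.loc - Finsupp.single (q, k) 1 + Finsupp.single (q', k + 1) 1 →
      γ'.reg = γ.reg →
      ConcStep P γ ((q, Act.incr, q'), k) γ'
  | read {q q' : Q} {k i : ℕ} {α : Fin dim} {x : D} {γ γ' : Conc Q D dim} :
      (q, Act.read i α x, q') ∈ P.T → 0 < γ.loc (q, k) →
      regVal P γ k i α = x →
      γ'.loc = γ.loc - Finsupp.single (q, k) 1 + Finsupp.single (q', k) 1 →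
      γ'.reg = γ.reg →
      ConcStep P γ ((q, Act.read i α x, q'), k) γ'
  | write {q q' : Q} {k : ℕ} {α : Fin dim} {x : D} {γ γ' : Conc Q D dim} :
      (q, Act.write α x, q') ∈ P.T → 0 < γ.loc (q, k) →
      γ'.loc = γ.loc - Finsupp.single (q, k) 1 + Finsupp.single (q', k) 1 →
      γ'.reg = updReg γ.reg k α x →
      ConcStep P γ ((q, Act.write α x, q'), k) γ'

/-- Concrete reachability. -/
def ConcReach [DecidableEq Q] (P : Protocol Q D dim) : Conc Q D dim → Conc Q D dim → Prop :=
  Relation.ReflTransGen (fun γ γ' => ∃ m, ConcStep P γ m γ')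

/-- Initial concrete configuration with `n` processes. -/
noncomputable def Conc.init [DecidableEq Q] (P : Protocol Q D dim) (n : ℕ) : Conc Q D dim :=
  ⟨Finsupp.single (P.q0, 0) n, fun _ _ => P.d0⟩

/-- Number of processes of a concrete configuration. -/
def Conc.size (γ : Conc Q D dim) : ℕ := γ.loc.sum fun _ n => n

/-- Support of the location multiset of a concrete configuration. -/
def Conc.supp (γ : Conc Q D dim) : Set (Q × ℕ) := {l | 0 < γ.loc l}

/-- The set of non-blank registers of a concrete configuration. -/
def Conc.nonBlank (P : Protocol Q D dim) (γ : Conc Q D dim) : Set (ℕ × Fin dim) :=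
  {r | γ.reg r.1 r.2 ≠ P.d0}

/-- An abstract configuration: a set of locations and a set of written registers. -/
structure Abs (Q : Type) (dim : ℕ) where
  S : Set (Q × ℕ)
  W : Set (ℕ × Fin dim)

/-- Abstract step relation. -/
inductive AbsStep (P : Protocol Q D dim) :
    Abs Q dim → Move Q D dim → Abs Q dim → Prop where
  | incr {σ : Abs Q dim} {q q' : Q} {k : ℕ} :
      (q, Act.incr, q') ∈ P.T → (q, k) ∈ σ.S →
      AbsStep P σ ((q, Act.incr, q'), k) ⟨σ.S ∪ {(q', k + 1)}, σ.W⟩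
  | readBlank {σ : Abs Q dim} {q q' : Q} {k i : ℕ} {α : Fin dim} :
      (q, Act.read i α P.d0, q') ∈ P.T → (q, k) ∈ σ.S →
      (i ≤ k → (k - i, α) ∉ σ.W) →
      AbsStep P σ ((q, Act.read i α P.d0, q'), k) ⟨σ.S ∪ {(q', k)}, σ.W⟩
  | readVal {σ : Abs Q dim} {q q' q1 q2 : Q} {k i : ℕ} {α : Fin dim} {x : D} :
      x ≠ P.d0 → (q, Act.read i α x, q') ∈ P.T → (q, k) ∈ σ.S →
      i ≤ k → (k - i, α) ∈ σ.W →
      (q1, Act.write α x, q2) ∈ P.T → (q1, k - i) ∈ σ.S → (q2, k - i) ∈ σ.S →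
      AbsStep P σ ((q, Act.read i α x, q'), k) ⟨σ.S ∪ {(q', k)}, σ.W⟩
  | write {σ : Abs Q dim} {q q' : Q} {k : ℕ} {α : Fin dim} {x : D} :
      (q, Act.write α x, q') ∈ P.T → (q, k) ∈ σ.S →
      AbsStep P σ ((q, Act.write α x, q'), k) ⟨σ.S ∪ {(q', k)}, σ.W ∪ {(k, α)}⟩

/-- Abstract reachability. -/
def AbsReach (P : Protocol Q D dim) : Abs Q dim → Abs Q dim → Prop :=
  Relation.ReflTransGen (fun σ σ' => ∃ m, AbsStep P σ m σ')

/-- The initial abstract configuration. -/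
def Abs.init (P : Protocol Q D dim) : Abs Q dim := ⟨{(P.q0, 0)}, ∅⟩

/-- Abstract execution along a list of moves. -/
inductive AbsRun (P : Protocol Q D dim) : Abs Q dim → List (Move Q D dim) → Abs Q dim → Prop
  | nil (σ : Abs Q dim) : AbsRun P σ [] σ
  | cons {σ σ' σ'' : Abs Q dim} {m : Move Q D dim} {ms : List (Move Q D dim)} :
      AbsStep P σ m σ' → AbsRun P σ' ms σ'' → AbsRun P σ (m :: ms) σ''

/-- First-write order of a schedule, given a set of already written registers. -/
noncomputable def fwo (W : Set (ℕ × Fin dim)) : List (Move Q D dim) → List (ℕ × Fin dim)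
  | [] => []
  | ((_, Act.write α _, _), k) :: ms =>
      if (k, α) ∈ W then fwo W ms else (k, α) :: fwo (W ∪ {(k, α)}) ms
  | _ :: ms => fwo W ms

/-- Projection of a sequence of registers onto those whose round lies in `[k - v, k]`. -/
def winproj (v k : ℕ) (F : List (ℕ × Fin dim)) : List (ℕ × Fin dim) :=
  F.filter (fun r => decide (k - v ≤ r.1 ∧ r.1 ≤ k))

/-! With `v = 0` a move on round `k` only looks at round `k`, and the only step that is not
monotone in the abstract configuration is a read of the blank value, which (with a single
register per round) is impossible once the register of its round has been written. Hence any
execution can be reordered so that rounds never decrease and, on each round, all blank reads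
precede the other moves. Two executions sorted this way can be merged like sorted lists: the
merged execution never performs a blank read after a write on the same round, so each of its
steps is enabled, and it covers what both executions cover. -/

namespace Move

def target : Move Q D dim → Q × ℕ
  | ((_, Act.incr, q'), k) => (q', k + 1)
  | ((_, Act.read _ _ _, q'), k) => (q', k)
  | ((_, Act.write _ _, q'), k) => (q', k)

def writes : Move Q D dim → Set (ℕ × Fin dim)
  | ((_, Act.write α _, _), k) => {(k, α)}
  | _ => ∅

/-- Blank reads of round `k` come first (key `2k`), every other move of round `k` after
them (key `2k + 1`). -/
noncomputable def key (P : Protocol Q D dim) : Move Q D dim → ℕ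
  | ((_, Act.read _ _ x, _), k) => if x = P.d0 then 2 * k else 2 * k + 1
  | (_, k) => 2 * k + 1

def KeyLE (P : Protocol Q D dim) (m m' : Move Q D dim) : Prop := m.key P ≤ m'.key P

instance (P : Protocol Q D dim) : Std.Total (KeyLE P) := ⟨fun _ _ => le_total _ _⟩

instance (P : Protocol Q D dim) : IsTrans (Move Q D dim) (KeyLE P) := ⟨fun _ _ _ => le_trans⟩

variable (P : Protocol Q D dim) (m : Move Q D dim)

theorem round_le_target : m.2 ≤ m.target.2 := by
  rcases m with ⟨⟨_, _ | _ | _, _⟩, _⟩ <;> simp [target]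

theorem key_eq_or : m.key P = 2 * m.2 ∨ m.key P = 2 * m.2 + 1 := by
  rcases m with ⟨⟨_, _ | ⟨_, _, x⟩ | _, _⟩, _⟩ <;> simp only [key] <;> (try split_ifs) <;> simp

theorem key_of_blank_read {q q' : Q} {i : ℕ} {α : Fin dim}
    (h : m.1 = (q, Act.read i α P.d0, q')) : m.key P = 2 * m.2 := by
  obtain ⟨_, k⟩ := m
  subst h
  simp [key]

theorem key_of_mem_writes {r : ℕ × Fin dim} (h : r ∈ m.writes) :
    r.1 = m.2 ∧ m.key P = 2 * m.2 + 1 := by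
  rcases m with ⟨⟨_, _ | _ | _, _⟩, _⟩ <;> simp_all [writes, key]

end Move

def Abs.after (σ : Abs Q dim) (m : Move Q D dim) : Abs Q dim :=
  ⟨σ.S ∪ {m.target}, σ.W ∪ m.writes⟩

instance : Preorder (Abs Q dim) := Preorder.lift fun σ => (σ.S, σ.W)

namespace Abs

theorem le_iff {σ τ : Abs Q dim} : σ ≤ τ ↔ σ.S ⊆ τ.S ∧ σ.W ⊆ τ.W := Iff.rfl

theorem le_after (σ : Abs Q dim) (m : Move Q D dim) : σ ≤ σ.after m :=
  le_iff.2 ⟨Set.subset_union_left, Set.subset_union_left⟩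

theorem after_mono {σ τ : Abs Q dim} (h : σ ≤ τ) (m : Move Q D dim) : σ.after m ≤ τ.after m :=
  le_iff.2 ⟨Set.union_subset_union_left _ (le_iff.1 h).1,
    Set.union_subset_union_left _ (le_iff.1 h).2⟩

theorem after_comm (σ : Abs Q dim) (m m' : Move Q D dim) :
    (σ.after m).after m' = (σ.after m').after m := by
  simp only [after, Set.union_right_comm _ {m.target}, Set.union_right_comm _ m.writes]

end Abs

section Semantics

variable {P : Protocol Q D dim} {σ σ' τ : Abs Q dim} {m : Move Q D dim}

theorem AbsStep.eq_after (h : AbsStep P σ m τ) : τ = σ.after m := by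
  cases h <;> simp [Abs.after, Move.target, Move.writes]

theorem AbsReach.exists_absRun (h : AbsReach P σ τ) : ∃ ms, AbsRun P σ ms τ := by
  induction h using Relation.ReflTransGen.head_induction_on with
  | refl => exact ⟨[], .nil _⟩
  | head hstep _ ih =>
    obtain ⟨m, hm⟩ := hstep
    obtain ⟨ms, hms⟩ := ih
    exact ⟨m :: ms, .cons hm hms⟩

theorem read_round_eq_zero (hv : P.v = 0) {q q' : Q} {i : ℕ} {α : Fin dim} {x : D}
    (hT : (q, Act.read i α x, q') ∈ P.T) : i = 0 :=
  Nat.le_zero.mp (hv ▸ P.read_le q i α x q' hT)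

theorem AbsStep.transfer (hv : P.v = 0) (h : AbsStep P σ m τ)
    (hS : ∀ q, (q, m.2) ∈ σ.S → (q, m.2) ∈ σ'.S)
    (hW : ∀ α, (m.2, α) ∈ σ.W → (m.2, α) ∈ σ'.W)
    (hblank : ∀ q i α q', m.1 = (q, Act.read i α P.d0, q') → (m.2, α) ∉ σ'.W) :
    AbsStep P σ' m (σ'.after m) := by
  cases h with
  | incr hT hq =>
    simpa [Abs.after, Move.target, Move.writes] using AbsStep.incr hT (hS _ hq)
  | readBlank hT hq _ =>
    obtain rfl := read_round_eq_zero hv hT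
    simpa [Abs.after, Move.target, Move.writes] using
      AbsStep.readBlank hT (hS _ hq) fun _ => hblank _ _ _ _ rfl
  | readVal hx hT hq _ hw hT' hq₁ hq₂ =>
    obtain rfl := read_round_eq_zero hv hT
    simpa [Abs.after, Move.target, Move.writes] using
      AbsStep.readVal hx hT (hS _ hq) (Nat.zero_le _) (hW _ hw) hT' (hS _ hq₁) (hS _ hq₂)
  | write hT hq =>
    simpa [Abs.after, Move.target, Move.writes] using AbsStep.write hT (hS _ hq)

end Semantics

section OneRegister

variable {P : Protocol Q D 1} {σ σ₁ σ₂ τ : Abs Q 1} {m m₁ m₂ : Move Q D 1}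

theorem AbsStep.not_mem_W_of_key_eq (hv : P.v = 0) (h : AbsStep P σ m τ)
    (hk : m.key P = 2 * m.2) (α : Fin 1) : (m.2, α) ∉ σ.W := by
  cases h with
  | @readBlank _ _ _ _ β hT _ hW =>
    obtain rfl := read_round_eq_zero hv hT
    obtain rfl := Subsingleton.elim α β
    exact hW (Nat.zero_le _)
  | readVal hx => simp [Move.key, hx] at hk
  | incr | write => simp [Move.key] at hk

/-- `hk` and `ht` say that `m` is a valued read or a write; with a single register per round,
either can only happen once the register of round `m.2` has been written. -/
theorem AbsStep.mem_W_of_key_eq (hv : P.v = 0) (h : AbsStep P σ m τ)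
    (hk : m.key P = 2 * m.2 + 1) (ht : m.target.2 = m.2) (α : Fin 1) : (m.2, α) ∈ τ.W := by
  cases h with
  | incr => simp [Move.target] at ht
  | readBlank => simp [Move.key] at hk
  | @readVal _ _ _ _ _ _ β _ _ hT _ _ hW =>
    obtain rfl := read_round_eq_zero hv hT
    obtain rfl := Subsingleton.elim α β
    exact hW
  | @write _ _ _ β =>
    obtain rfl := Subsingleton.elim α β
    exact Or.inr rfl

/-- Moves can be sorted by key: a move never needs an earlier move of larger key. -/
theorem AbsStep.swap (hv : P.v = 0) (h₁ : AbsStep P σ m₁ σ₁) (h₂ : AbsStep P σ₁ m₂ σ₂)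
    (hk : m₂.key P < m₁.key P) :
    AbsStep P σ m₂ (σ.after m₂) ∧ AbsStep P (σ.after m₂) m₁ σ₂ := by
  obtain rfl := h₁.eq_after
  obtain rfl := h₂.eq_after
  have hk₁ := m₁.key_eq_or P
  have hk₂ := m₂.key_eq_or P
  have ht₁ := m₁.round_le_target
  constructor
  · refine h₂.transfer hv (fun q hq => ?_) (fun α hα => ?_) fun q i α q' hm hα => ?_
    · rcases hq with hq | hq
      · exact hq
      have hq' : m₂.2 = m₁.target.2 := congrArg Prod.snd hq
      obtain hk₂ | hk₂ := hk₂
      · have hround : m₂.2 = m₁.2 := by omega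
        exact absurd (hround ▸ h₁.mem_W_of_key_eq hv (by omega) (by omega) 0)
          (h₂.not_mem_W_of_key_eq hv hk₂ 0)
      · omega
    · obtain hk₂ | hk₂ := hk₂
      · exact absurd hα (h₂.not_mem_W_of_key_eq hv hk₂ α)
      rcases hα with hα | hα
      · exact hα
      · have := m₁.key_of_mem_writes P hα
        simp only at this
        omega
    · exact h₂.not_mem_W_of_key_eq hv (m₂.key_of_blank_read P hm) α (Set.mem_union_left _ hα)
  · rw [Abs.after_comm]
    refine h₁.transfer hv (fun q hq => Set.mem_union_left _ hq)
      (fun α hα => Set.mem_union_left _ hα) fun q i α q' hm hα => ?_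
    rcases hα with hα | hα
    · exact h₁.not_mem_W_of_key_eq hv (m₁.key_of_blank_read P hm) α hα
    · have := m₂.key_of_mem_writes P hα
      have := m₁.key_of_blank_read P hm
      omega

theorem AbsRun.orderedInsert (hv : P.v = 0) :
    ∀ {σ τ : Abs Q 1} {m : Move Q D 1} {ns : List (Move Q D 1)}, AbsRun P σ (m :: ns) τ →
      AbsRun P σ (ns.orderedInsert (Move.KeyLE P) m) τ
  | _, _, _, [], h => h
  | _, _, m, n :: ns, h => by
    by_cases hmn : Move.KeyLE P m n
    · simpa [hmn] using h
    · obtain _ | ⟨h₁, _ | ⟨h₂, hrest⟩⟩ := h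
      obtain ⟨s₁, s₂⟩ := h₁.swap hv h₂ (lt_of_not_ge hmn)
      simpa [hmn] using AbsRun.cons s₁ ((AbsRun.cons s₂ hrest).orderedInsert hv)

theorem AbsRun.insertionSort (hv : P.v = 0) {ms : List (Move Q D 1)} (h : AbsRun P σ ms τ) :
    AbsRun P σ (ms.insertionSort (Move.KeyLE P)) τ := by
  induction h with
  | nil => exact .nil _
  | cons hstep _ ih => exact (AbsRun.cons hstep ih).orderedInsert hv

/-- `ms` is a key-sorted run from `σ₀ ≤ σ` to `σ₁` that comes, in key order, after every write
recorded in `σ`; such a run can be replayed on top of `σ`. -/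
structure Replayable (P : Protocol Q D 1) (σ σ₀ : Abs Q 1) (ms : List (Move Q D 1))
    (σ₁ : Abs Q 1) : Prop where
  run : AbsRun P σ₀ ms σ₁
  sorted : ms.Pairwise (Move.KeyLE P)
  le : σ₀ ≤ σ
  lt_key : ∀ r ∈ σ.W, ∀ x ∈ ms, 2 * r.1 < x.key P

theorem lt_key_after {ms : List (Move Q D 1)} (h : ∀ r ∈ σ.W, ∀ x ∈ ms, 2 * r.1 < x.key P)
    (hm : ∀ x ∈ ms, m.key P ≤ x.key P) : ∀ r ∈ (σ.after m).W, ∀ x ∈ ms, 2 * r.1 < x.key P := by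
  rintro r (hr | hr) x hx
  · exact h r hr x hx
  · have := m.key_of_mem_writes P hr
    have := hm x hx
    omega

namespace Replayable

variable {σ₀ σ₁ : Abs Q 1} {ms : List (Move Q D 1)}

theorem le_of_nil (h : Replayable P σ σ₀ [] σ₁) : σ₁ ≤ σ := by
  obtain ⟨⟨⟩, -, hle, -⟩ := h
  exact hle

theorem after (h : Replayable P σ σ₀ ms σ₁) (hm : ∀ x ∈ ms, m.key P ≤ x.key P) :
    Replayable P (σ.after m) σ₀ ms σ₁ :=
  ⟨h.run, h.sorted, h.le.trans (σ.le_after m), lt_key_after h.lt_key hm⟩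

theorem step (hv : P.v = 0) (h : Replayable P σ σ₀ (m :: ms) σ₁) :
    AbsStep P σ m (σ.after m) ∧ Replayable P (σ.after m) (σ₀.after m) ms σ₁ := by
  obtain ⟨_ | ⟨hstep, hrun⟩, hsorted, hle, hkey⟩ := h
  obtain rfl := hstep.eq_after
  have hmin : ∀ x ∈ ms, m.key P ≤ x.key P := fun _ hx => List.rel_of_pairwise_cons hsorted hx
  refine ⟨hstep.transfer hv (fun _ hq => (Abs.le_iff.1 hle).1 hq)
      (fun _ hα => (Abs.le_iff.1 hle).2 hα) fun q i α q' hm hα => ?_,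
    hrun, hsorted.of_cons, Abs.after_mono hle m,
    lt_key_after (fun r hr x hx => hkey r hr x (.tail _ hx)) hmin⟩
  have := hkey _ hα m List.mem_cons_self
  have := m.key_of_blank_read P hm
  omega

theorem exists_absReach (hv : P.v = 0) {σ σm σm' σn σn' : Abs Q 1}
    {ms ns : List (Move Q D 1)} (hm : Replayable P σ σm ms σm')
    (hn : Replayable P σ σn ns σn') :
    ∃ τ, AbsReach P σ τ ∧ σm' ≤ τ ∧ σn' ≤ τ :=
  match ms, ns, hm, hn with
  | [], [], hm, hn => ⟨σ, .refl, hm.le_of_nil, hn.le_of_nil⟩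
  | [], n :: ns, hm, hn => by
    obtain ⟨hstep, hn'⟩ := hn.step hv
    obtain ⟨τ, hτ, h₁, h₂⟩ := exists_absReach hv (hm.after (by simp)) hn'
    exact ⟨τ, .head ⟨n, hstep⟩ hτ, h₁, h₂⟩
  | m :: ms, ns, hm, hn => by
    by_cases hle : ∀ x ∈ ns, m.key P ≤ x.key P
    · obtain ⟨hstep, hm'⟩ := hm.step hv
      obtain ⟨τ, hτ, h₁, h₂⟩ := exists_absReach hv hm' (hn.after hle)
      exact ⟨τ, .head ⟨m, hstep⟩ hτ, h₁, h₂⟩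
    obtain ⟨x, hx, hxm⟩ := not_forall₂.1 hle
    obtain ⟨n, ns, rfl⟩ := List.exists_cons_of_ne_nil (List.ne_nil_of_mem hx)
    have hnm : n.key P < m.key P := by
      rw [not_le] at hxm
      rcases List.mem_cons.1 hx with rfl | hx
      · exact hxm
      · exact lt_of_le_of_lt (List.rel_of_pairwise_cons hn.sorted hx) hxm
    have hle' : ∀ x ∈ m :: ms, n.key P ≤ x.key P := by
      rintro x (_ | ⟨_, hx⟩)
      · exact hnm.le
      · exact hnm.le.trans (List.rel_of_pairwise_cons hm.sorted hx)
    obtain ⟨hstep, hn'⟩ := hn.step hv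
    obtain ⟨τ, hτ, h₁, h₂⟩ := exists_absReach hv (hm.after hle') hn'
    exact ⟨τ, .head ⟨n, hstep⟩ hτ, h₁, h₂⟩
termination_by ms.length + ns.length

end Replayable

theorem directedOn_absReach (hv : P.v = 0) :
    DirectedOn (· ≤ ·) {σ | AbsReach P (Abs.init P) σ} := by
  have replayable {τ : Abs Q 1} {ms : List (Move Q D 1)} (h : AbsRun P (Abs.init P) ms τ) :
      Replayable P (Abs.init P) (Abs.init P) (ms.insertionSort (Move.KeyLE P)) τ :=
    ⟨h.insertionSort hv, List.pairwise_insertionSort _ _, le_rfl, by simp [Abs.init]⟩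
  intro σ₁ h₁ σ₂ h₂
  obtain ⟨ms, hms⟩ := h₁.exists_absRun
  obtain ⟨ns, hns⟩ := h₂.exists_absRun
  exact (replayable hms).exists_absReach hv (replayable hns)

end OneRegister

/-- Compatibility of coverable locations when `v = 0` and there is a single
register per round (Proposition 2). -/
theorem all_compatible_v0_dim1 {Q D : Type}
    (P : Protocol Q D 1) (hv : P.v = 0)
    (L : Finset (Q × ℕ))
    (hcov : ∀ l ∈ L, ∃ σ : Abs Q 1, AbsReach P (Abs.init P) σ ∧ l ∈ σ.S) :
    ∃ σ : Abs Q 1, AbsReach P (Abs.init P) σ ∧ ∀ l ∈ L, l ∈ σ.S := by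
  induction L using Finset.induction_on with
  | empty => exact ⟨Abs.init P, .refl, by simp⟩
  | insert a L _ ih =>
    obtain ⟨σ₁, h₁, hL⟩ := ih fun l hl => hcov l (Finset.mem_insert_of_mem hl)
    obtain ⟨σ₂, h₂, ha⟩ := hcov a (Finset.mem_insert_self a L)
    obtain ⟨σ, hσ, h₁σ, h₂σ⟩ := directedOn_absReach hv σ₁ h₁ σ₂ h₂
    refine ⟨σ, hσ, (Finset.forall_mem_insert _ _ _).2 ⟨(Abs.le_iff.1 h₂σ).1 ha, ?_⟩⟩
    exact fun l hl => (Abs.le_iff.1 h₁σ).1 (hL l hl)
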